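/- Let W_1 ≥ W_2 ≥ ... ≥ W_N be reals, ρ_1,...,ρ_N ∈ (0,1) with ∑_{i=1}^N ρ_i = M for an integer 1 ≤ M < N. Set ε = min(min_i ρ_i, 1 − max_i ρ_i) > 0. Then ∑_{i=1}^M W_i(ρ_i − 1) + ∑_{i=M+1}^N W_i ρ_i ≤ −ε(W_1 − W_N). -/

import Mathlib

open Finset

/-!
Write the drift as `∑ Wᵢ cᵢ` with `cᵢ = ρᵢ - 1[i ≤ M]`, so that `∑ cᵢ = 0`. Every proper
partial sum `c₁ + ⋯ + c_k` is at most `-ε`: for `k ≤ M` all its terms are negative and the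
first is `ρ₁ - 1 ≤ -ε`, and for `k ≥ M` it equals `-(ρ_{k+1} + ⋯ + ρ_N) ≤ -ρ_N ≤ -ε`.
Summation by parts against the nonincreasing weights then gives `∑ Wᵢ cᵢ ≤ -ε (W₁ - W_N)`.
-/

theorem sum_mul_le_of_partialSum_le {W c : ℕ → ℝ} {ε : ℝ} {n : ℕ} (hn : 1 ≤ n)
    (hW : ∀ k ∈ Ico 1 n, W (k + 1) ≤ W k)
    (hc : ∀ k ∈ Ico 1 n, ∑ i ∈ Icc 1 k, c i ≤ -ε) :
    ∑ i ∈ Icc 1 n, W i * c i ≤ W n * ∑ i ∈ Icc 1 n, c i - ε * (W 1 - W n) := by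
  induction n, hn using Nat.le_induction with
  | base => simp
  | succ n hn ih =>
    have hn' : n ∈ Ico 1 (n + 1) := by simp; omega
    have hsub : Ico 1 n ⊆ Ico 1 (n + 1) := Ico_subset_Ico_right n.le_succ
    have ih := ih (fun k hk => hW k (hsub hk)) (fun k hk => hc k (hsub hk))
    have hstep : (W n - W (n + 1)) * (∑ i ∈ Icc 1 n, c i + ε) ≤ 0 :=
      mul_nonpos_of_nonneg_of_nonpos (sub_nonneg.2 (hW n hn')) (by linarith [hc n hn'])
    rw [sum_Icc_succ_top (by omega), sum_Icc_succ_top (by omega)]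
    nlinarith

theorem sum_mul_le_neg_mul_of_partialSum_le {W c : ℕ → ℝ} {ε : ℝ} {n : ℕ} (hn : 1 ≤ n)
    (hW : ∀ k ∈ Ico 1 n, W (k + 1) ≤ W k)
    (hc : ∀ k ∈ Ico 1 n, ∑ i ∈ Icc 1 k, c i ≤ -ε) (hsum : ∑ i ∈ Icc 1 n, c i = 0) :
    ∑ i ∈ Icc 1 n, W i * c i ≤ -ε * (W 1 - W n) := by
  simpa [hsum] using sum_mul_le_of_partialSum_le hn hW hc

theorem sum_Icc_one_add_sum_Icc_succ {β : Type*} [AddCommMonoid β] (f : ℕ → β) {m n : ℕ}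
    (hmn : m ≤ n) : ∑ i ∈ Icc 1 m, f i + ∑ i ∈ Icc (m + 1) n, f i = ∑ i ∈ Icc 1 n, f i := by
  simpa only [← Icc_add_one_left_eq_Ioc, zero_add] using sum_Ioc_consecutive f m.zero_le hmn

def driftCoeff (M : ℕ) (ρ : ℕ → ℝ) (i : ℕ) : ℝ := ρ i - if i ≤ M then 1 else 0

theorem sum_mul_driftCoeff {M N : ℕ} (hMN : M ≤ N) (W ρ : ℕ → ℝ) :
    ∑ i ∈ Icc 1 N, W i * driftCoeff M ρ i =
      ∑ i ∈ Icc 1 M, W i * (ρ i - 1) + ∑ i ∈ Icc (M + 1) N, W i * ρ i := by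
  rw [← sum_Icc_one_add_sum_Icc_succ _ hMN]
  congr 1 <;> refine sum_congr rfl fun i hi => ?_ <;> rw [mem_Icc] at hi
  · simp [driftCoeff, hi.2]
  · simp [driftCoeff, show ¬ i ≤ M by omega]

theorem sum_driftCoeff {M N : ℕ} (hMN : M ≤ N) (ρ : ℕ → ℝ) :
    ∑ i ∈ Icc 1 N, driftCoeff M ρ i = ∑ i ∈ Icc 1 N, ρ i - M := by
  simpa [sum_sub_distrib, ← sum_Icc_one_add_sum_Icc_succ ρ hMN, add_sub_right_comm]
    using sum_mul_driftCoeff hMN 1 ρ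

theorem sum_driftCoeff_le_of_le_of_le_one {M k : ℕ} {ρ : ℕ → ℝ} (hk : 1 ≤ k) (hkM : k ≤ M)
    (hρ : ∀ i ∈ Icc 1 k, ρ i ≤ 1) : ∑ i ∈ Icc 1 k, driftCoeff M ρ i ≤ ρ 1 - 1 := by
  have hnonpos : ∀ i ∈ Icc 1 k, 0 ≤ -driftCoeff M ρ i := fun i hi => by
    rw [mem_Icc] at hi
    simp [driftCoeff, show i ≤ M by omega, hρ i (mem_Icc.2 hi)]
  have hfirst : driftCoeff M ρ 1 = ρ 1 - 1 := by simp [driftCoeff, hk.trans hkM]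
  have := single_le_sum hnonpos (mem_Icc.2 ⟨le_rfl, hk⟩)
  rw [sum_neg_distrib, hfirst] at this
  linarith

theorem sum_driftCoeff_le_of_le_of_nonneg {M N k : ℕ} {ρ : ℕ → ℝ} (hMk : M ≤ k) (hkN : k < N)
    (hρ : ∀ i ∈ Icc 1 N, 0 ≤ ρ i) (hsum : ∑ i ∈ Icc 1 N, ρ i = M) :
    ∑ i ∈ Icc 1 k, driftCoeff M ρ i ≤ -ρ N := by
  have htail : ∑ i ∈ Icc (k + 1) N, driftCoeff M ρ i = ∑ i ∈ Icc (k + 1) N, ρ i :=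
    sum_congr rfl fun i hi => by
      rw [mem_Icc] at hi
      simp [driftCoeff, show ¬ i ≤ M by omega]
  have hN : ρ N ≤ ∑ i ∈ Icc (k + 1) N, ρ i :=
    single_le_sum (fun i hi => hρ i (Icc_subset_Icc_left (by omega) hi)) (mem_Icc.2 ⟨hkN, le_rfl⟩)
  have := sum_Icc_one_add_sum_Icc_succ (driftCoeff M ρ) hkN.le
  rw [sum_driftCoeff (hMk.trans hkN.le), hsum, sub_self, htail] at this
  linarith

/-- Key drift inequality for the VWD policy: with sorted weights and scheduling
fractions `ρ_i ∈ (0,1)` summing to `M`, the weighted drift is at most `−ε(W₁ − W_N)`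
where `ε = min(min_i ρ_i, 1 − max_i ρ_i)`. -/
theorem vwd_drift_inequality
    (N M : ℕ) (hMN : M < N) (W ρ : ℕ → ℝ)
    (hW : ∀ i ∈ Finset.Icc 1 (N - 1), W (i + 1) ≤ W i)
    (hρ : ∀ i ∈ Finset.Icc 1 N, ρ i ∈ Set.Ioo (0 : ℝ) 1)
    (hsum : ∑ i ∈ Finset.Icc 1 N, ρ i = M)
    (ε : ℝ)
    (hε : ε = min ((Finset.Icc 1 N).inf' (Finset.nonempty_Icc.mpr (by omega)) ρ)
        (1 - (Finset.Icc 1 N).sup' (Finset.nonempty_Icc.mpr (by omega)) ρ)) :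
    ∑ i ∈ Finset.Icc 1 M, W i * (ρ i - 1) + ∑ i ∈ Finset.Icc (M + 1) N, W i * ρ i
      ≤ -ε * (W 1 - W N) := by
  have h1 : 1 ∈ Icc 1 N := mem_Icc.2 ⟨le_rfl, by omega⟩
  have hN : N ∈ Icc 1 N := mem_Icc.2 ⟨by omega, le_rfl⟩
  have hε_le_ρN : ε ≤ ρ N := hε ▸ (min_le_left _ _).trans (inf'_le ρ hN)
  have hρ1_le : ρ 1 ≤ 1 - ε := by
    linarith [hε ▸ min_le_right _ _, le_sup' ρ h1]
  have hpartial : ∀ k ∈ Ico 1 N, ∑ i ∈ Icc 1 k, driftCoeff M ρ i ≤ -ε := by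
    intro k hk
    rw [mem_Ico] at hk
    rcases le_total k M with hkM | hMk
    · have := sum_driftCoeff_le_of_le_of_le_one hk.1 hkM fun i hi =>
        (hρ i (Icc_subset_Icc_right hk.2.le hi)).2.le
      linarith
    · have := sum_driftCoeff_le_of_le_of_nonneg hMk hk.2 (fun i hi => (hρ i hi).1.le) hsum
      linarith
  rw [← sum_mul_driftCoeff hMN.le]
  refine sum_mul_le_neg_mul_of_partialSum_le (by omega)
    (fun k hk => hW k (by rw [mem_Ico] at hk; rw [mem_Icc]; omega)) hpartial ?_
  rw [sum_driftCoeff hMN.le, hsum, sub_self]
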